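/- Let f : ℝ^n → ℝ be differentiable with L-Lipschitz gradient, let c ∈ (0,1), α > 0, κ₁, κ₂, κ₃ > 0, and let x, s, g, F ∈ appropriate Euclidean spaces with J, J̃ matrices such that ∇f(x) = J^T F, g = J̃^T F, ‖J − J̃‖ ≤ α t (spectral norm), ‖F‖ ≤ κ₃ ‖g‖, κ₂ ‖g‖ ≤ ‖s‖, and −g^T s ≥ (1/κ₁) ‖s‖². If 0 < t ≤ 2(1−c)κ₂ / ((L κ₂ + 2 α κ₃) κ₁), then f(x + t s) ≤ f(x) + c t s^T g. -/

import Mathlib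

open scoped RealInnerProductSpace
open Matrix

noncomputable def specNorm {m n : ℕ} (A : Matrix (Fin m) (Fin n) ℝ) : ℝ :=
  ‖LinearMap.toContinuousLinearMap (Matrix.toEuclideanLin A)‖

/-!
The descent lemma for an `L`-smooth `f` gives
`f (x + t s) ≤ f x + t ⟪∇f x, s⟫ + (L/2) t² ‖s‖²`. Writing `∇f x = g + (J - J̃)ᵀ F`, the error
term is at most `‖F‖ ‖J - J̃‖ ‖s‖ t ≤ (α κ₃ / κ₂) t² ‖s‖²`, so `f` decreases along `s` as if
`g` were the true gradient, up to an extra quadratic term. The sufficient-descent condition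
`‖s‖² ≤ κ₁ (-⟪g, s⟫)` then absorbs the whole quadratic term into `(1 - c) t ⟪g, s⟫` once `t` is
below the stated threshold.
-/

section Descent

variable {E : Type*} [NormedAddCommGroup E] [InnerProductSpace ℝ E] [CompleteSpace E]

theorem hasDerivAt_comp_add_smul {f : E → ℝ} {x v : E} {u : ℝ}
    (hf : DifferentiableAt ℝ f (x + u • v)) :
    HasDerivAt (fun r : ℝ => f (x + r • v)) ⟪gradient f (x + u • v), v⟫ u := by
  have hline : HasDerivAt (fun r : ℝ => x + r • v) v u := by
    simpa using ((hasDerivAt_id u).smul_const v).const_add x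
  rw [inner_gradient_left]
  exact hf.hasFDerivAt.comp_hasDerivAt u hline

theorem inner_gradient_add_smul_le {f : E → ℝ} {L : ℝ} {x : E}
    (hL : ∀ y, ‖gradient f y - gradient f x‖ ≤ L * ‖y - x‖) (v : E) {u : ℝ} (hu : 0 ≤ u) :
    ⟪gradient f (x + u • v), v⟫ ≤ ⟪gradient f x, v⟫ + L * u * ‖v‖ ^ 2 :=
  calc ⟪gradient f (x + u • v), v⟫
      = ⟪gradient f x, v⟫ + ⟪gradient f (x + u • v) - gradient f x, v⟫ := by
        rw [inner_sub_left]; ring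
    _ ≤ ⟪gradient f x, v⟫ + ‖gradient f (x + u • v) - gradient f x‖ * ‖v‖ := by
        gcongr; exact real_inner_le_norm _ _
    _ ≤ ⟪gradient f x, v⟫ + L * ‖u • v‖ * ‖v‖ := by
        gcongr; simpa using hL (x + u • v)
    _ = ⟪gradient f x, v⟫ + L * u * ‖v‖ ^ 2 := by
        rw [norm_smul, Real.norm_of_nonneg hu]; ring

theorem le_add_inner_gradient_add_sq {f : E → ℝ} {L : ℝ} {x : E} (hf : Differentiable ℝ f)
    (hL : ∀ y, ‖gradient f y - gradient f x‖ ≤ L * ‖y - x‖) (v : E) :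
    f (x + v) ≤ f x + ⟪gradient f x, v⟫ + L / 2 * ‖v‖ ^ 2 := by
  have hφ (u : ℝ) := hasDerivAt_comp_add_smul (x := x) (v := v) (u := u) (hf _)
  have hB (u : ℝ) :
      HasDerivAt (fun r : ℝ => f x + r * ⟪gradient f x, v⟫ + L / 2 * r ^ 2 * ‖v‖ ^ 2)
        (⟪gradient f x, v⟫ + L * u * ‖v‖ ^ 2) u := by
    refine ((((hasDerivAt_id u).mul_const _).const_add (f x)).add
      (((hasDerivAt_pow 2 u).const_mul (L / 2)).mul_const (‖v‖ ^ 2))).congr_deriv ?_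
    push_cast; ring
  have := image_le_of_deriv_right_le_deriv_boundary (a := 0) (b := 1)
    (fun u _ => (hφ u).continuousAt.continuousWithinAt) (fun u _ => (hφ u).hasDerivWithinAt)
    (by simp) (fun u _ => (hB u).continuousAt.continuousWithinAt)
    (fun u _ => (hB u).hasDerivWithinAt)
    (fun u hu => inner_gradient_add_smul_le hL v hu.1) (Set.right_mem_Icc.2 zero_le_one)
  simpa using this

theorem armijo_of_inner_gradient_le {f : E → ℝ} {L M c κ₁ t : ℝ} {x s g : E}
    (hf : Differentiable ℝ f) (hL : ∀ y, ‖gradient f y - gradient f x‖ ≤ L * ‖y - x‖)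
    (hκ₁ : 0 < κ₁) (hc : c ≤ 1) (ht0 : 0 ≤ t)
    (hgrad : ⟪gradient f x, s⟫ ≤ ⟪g, s⟫ + M * t * ‖s‖ ^ 2)
    (hdesc : ‖s‖ ^ 2 ≤ κ₁ * -⟪g, s⟫) (ht : t * (L / 2 + M) * κ₁ ≤ 1 - c) :
    f (x + t • s) ≤ f x + c * t * ⟪s, g⟫ := by
  have hds := le_add_inner_gradient_add_sq hf hL (t • s)
  rw [real_inner_smul_right, norm_smul, Real.norm_of_nonneg ht0] at hds
  have hquad : (L / 2 + M) * t ^ 2 * ‖s‖ ^ 2 ≤ (1 - c) * t * -⟪g, s⟫ := by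
    refine le_of_mul_le_mul_right ?_ hκ₁
    calc (L / 2 + M) * t ^ 2 * ‖s‖ ^ 2 * κ₁ = t * (L / 2 + M) * κ₁ * (t * ‖s‖ ^ 2) := by ring
      _ ≤ (1 - c) * (t * ‖s‖ ^ 2) := by gcongr
      _ ≤ (1 - c) * (t * (κ₁ * -⟪g, s⟫)) := by gcongr
      _ = (1 - c) * t * -⟪g, s⟫ * κ₁ := by ring
  have hlin := mul_le_mul_of_nonneg_left hgrad ht0
  rw [real_inner_comm g s]
  linarith

end Descent

theorem inner_toEuclideanLin_transpose {m n : ℕ} (A : Matrix (Fin m) (Fin n) ℝ)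
    (F : EuclideanSpace ℝ (Fin m)) (s : EuclideanSpace ℝ (Fin n)) :
    ⟪Matrix.toEuclideanLin Aᵀ F, s⟫ = ⟪F, Matrix.toEuclideanLin A s⟫ := by
  rw [← Matrix.conjTranspose_eq_transpose_of_trivial,
    Matrix.toEuclideanLin_conjTranspose_eq_adjoint]
  exact LinearMap.adjoint_inner_left _ _ _

theorem norm_toEuclideanLin_le_specNorm {m n : ℕ} (A : Matrix (Fin m) (Fin n) ℝ)
    (s : EuclideanSpace ℝ (Fin n)) : ‖Matrix.toEuclideanLin A s‖ ≤ specNorm A * ‖s‖ :=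
  (LinearMap.toContinuousLinearMap (Matrix.toEuclideanLin A)).le_opNorm s

theorem specNorm_nonneg {m n : ℕ} (A : Matrix (Fin m) (Fin n) ℝ) : 0 ≤ specNorm A :=
  norm_nonneg _

theorem inner_toEuclideanLin_transpose_le_add {m n : ℕ} (J Jtil : Matrix (Fin m) (Fin n) ℝ)
    (F : EuclideanSpace ℝ (Fin m)) (s : EuclideanSpace ℝ (Fin n)) :
    ⟪Matrix.toEuclideanLin Jᵀ F, s⟫
      ≤ ⟪Matrix.toEuclideanLin Jtilᵀ F, s⟫ + ‖F‖ * specNorm (J - Jtil) * ‖s‖ := by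
  have hsplit : ⟪Matrix.toEuclideanLin Jᵀ F, s⟫
      = ⟪Matrix.toEuclideanLin Jtilᵀ F, s⟫ + ⟪F, Matrix.toEuclideanLin (J - Jtil) s⟫ := by
    rw [← inner_toEuclideanLin_transpose, ← inner_add_left, transpose_sub, map_sub,
      LinearMap.sub_apply, add_sub_cancel]
  have herr : ⟪F, Matrix.toEuclideanLin (J - Jtil) s⟫ ≤ ‖F‖ * (specNorm (J - Jtil) * ‖s‖) :=
    (real_inner_le_norm _ _).trans (by gcongr; exact norm_toEuclideanLin_le_specNorm _ s)
  rw [hsplit, mul_assoc]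
  gcongr

theorem armijo_fulfillment_jacobian_sampling_general (m n : ℕ)
    (f : EuclideanSpace ℝ (Fin n) → ℝ) (hf : Differentiable ℝ f) (L : ℝ)
    (hL : ∀ x y, ‖gradient f x - gradient f y‖ ≤ L * ‖x - y‖)
    (c α κ₁ κ₂ κ₃ : ℝ) (hc1 : c < 1)
    (hκ₁ : 0 < κ₁) (hκ₂ : 0 < κ₂) (hκ₃ : 0 < κ₃)
    (x s g : EuclideanSpace ℝ (Fin n)) (F : EuclideanSpace ℝ (Fin m))
    (J Jtil : Matrix (Fin m) (Fin n) ℝ) (t : ℝ)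
    (hgrad : gradient f x = Matrix.toEuclideanLin Jᵀ F)
    (hg : g = Matrix.toEuclideanLin Jtilᵀ F)
    (hJ : specNorm (J - Jtil) ≤ α * t)
    (hF : ‖F‖ ≤ κ₃ * ‖g‖)
    (hlow : κ₂ * ‖g‖ ≤ ‖s‖)
    (hdesc : -⟪g, s⟫ ≥ (1 / κ₁) * ‖s‖ ^ 2)
    (ht0 : 0 < t) (htsmall : t ≤ 2 * (1 - c) * κ₂ / ((L * κ₂ + 2 * α * κ₃) * κ₁)) :
    f (x + t • s) ≤ f x + c * t * ⟪s, g⟫ := by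
  -- A nonpositive denominator would make the step-size bound nonpositive.
  have hden : 0 < (L * κ₂ + 2 * α * κ₃) * κ₁ := by
    by_contra! h
    have := div_nonpos_of_nonneg_of_nonpos (by nlinarith : 0 ≤ 2 * (1 - c) * κ₂) h
    linarith
  have hstep : t * (L / 2 + α * κ₃ / κ₂) * κ₁ ≤ 1 - c := by
    rw [le_div_iff₀ hden] at htsmall
    have : t * (L / 2 + α * κ₃ / κ₂) * κ₁ = t * ((L * κ₂ + 2 * α * κ₃) * κ₁) / (2 * κ₂) := by
      field_simp
    rw [this, div_le_iff₀ (by positivity)]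
    linarith
  have hαt : 0 ≤ α * t := (specNorm_nonneg _).trans hJ
  have hgs : ‖g‖ ≤ ‖s‖ / κ₂ := by rw [le_div_iff₀ hκ₂]; linarith
  have herr : ‖F‖ * specNorm (J - Jtil) * ‖s‖ ≤ α * κ₃ / κ₂ * t * ‖s‖ ^ 2 :=
    calc ‖F‖ * specNorm (J - Jtil) * ‖s‖ ≤ κ₃ * ‖g‖ * (α * t) * ‖s‖ := by
          gcongr; exact specNorm_nonneg _
      _ ≤ κ₃ * (‖s‖ / κ₂) * (α * t) * ‖s‖ := by gcongr
      _ = α * κ₃ / κ₂ * t * ‖s‖ ^ 2 := by ring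
  have hinner : ⟪gradient f x, s⟫ ≤ ⟪g, s⟫ + α * κ₃ / κ₂ * t * ‖s‖ ^ 2 := by
    have := inner_toEuclideanLin_transpose_le_add J Jtil F s
    rw [hgrad, hg]
    linarith
  have hdesc' : ‖s‖ ^ 2 ≤ κ₁ * -⟪g, s⟫ := by
    rw [ge_iff_le, one_div_mul_eq_div, div_le_iff₀ hκ₁] at hdesc
    linarith
  exact armijo_of_inner_gradient_le hf (fun y => hL y x) hκ₁ hc1.le ht0.le hinner hdesc' hstep

/-- Armijo fulfillment lemma for the Jacobian-sampling variant: with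
`∇f(x) = JᵀF`, `g = J̃ᵀF`, `‖J − J̃‖ ≤ α t` (spectral norm), `‖F‖ ≤ κ₃‖g‖`,
`κ₂‖g‖ ≤ ‖s‖`, `−gᵀs ≥ (1/κ₁)‖s‖²`, and `0 < t ≤ 2(1−c)κ₂/((Lκ₂ + 2ακ₃)κ₁)`,
the Armijo condition `f(x + ts) ≤ f(x) + c t sᵀg` holds. -/
theorem armijo_fulfillment_jacobian_sampling (m n : ℕ)
    (f : EuclideanSpace ℝ (Fin n) → ℝ) (hf : Differentiable ℝ f) (L : ℝ)
    (hL : ∀ x y, ‖gradient f x - gradient f y‖ ≤ L * ‖x - y‖)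
    (c α κ₁ κ₂ κ₃ : ℝ) (hc0 : 0 < c) (hc1 : c < 1) (hα : 0 < α)
    (hκ₁ : 0 < κ₁) (hκ₂ : 0 < κ₂) (hκ₃ : 0 < κ₃)
    (x s g : EuclideanSpace ℝ (Fin n)) (F : EuclideanSpace ℝ (Fin m))
    (J Jtil : Matrix (Fin m) (Fin n) ℝ) (t : ℝ)
    (hgrad : gradient f x = Matrix.toEuclideanLin Jᵀ F)
    (hg : g = Matrix.toEuclideanLin Jtilᵀ F)
    (hJ : specNorm (J - Jtil) ≤ α * t)
    (hF : ‖F‖ ≤ κ₃ * ‖g‖)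
    (hlow : κ₂ * ‖g‖ ≤ ‖s‖)
    (hdesc : -⟪g, s⟫ ≥ (1 / κ₁) * ‖s‖ ^ 2)
    (ht0 : 0 < t) (htsmall : t ≤ 2 * (1 - c) * κ₂ / ((L * κ₂ + 2 * α * κ₃) * κ₁)) :
    f (x + t • s) ≤ f x + c * t * ⟪s, g⟫ :=
  armijo_fulfillment_jacobian_sampling_general m n f hf L hL c α κ₁ κ₂ κ₃ hc1 hκ₁ hκ₂ hκ₃ x s g F J
    Jtil t hgrad hg hJ hF hlow hdesc ht0 htsmall
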